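/- With Ω_{j+1} := Σ_{n=j+1}^{∞} γ_{j+1,n}/n! where γ_{j+1,n} := Σ_{s=1}^{j} μ_s^{n-2}/∏_{t=1,t≠s}^{j}(μ_s - μ_t), the identity μ_1 μ_2 ··· μ_j · Ω_{j+1} = ε^j_1(μ_1,...,μ_j) holds, where ε^j_1 is ε^j_α evaluated at α = 1, i.e., ε^j_1(μ_1,...,μ_j) = (-1)^{j-1}(Σ_{i=1}^{j} β^j_i (1 - e^{-μ_i}) - 1). -/

import Mathlib

/-!
With the barycentric weights `w_s = 1 / ∏_{t ≠ s} (μ_s - μ_t)`, the coefficient `γ_{j+1,n}` is the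
divided difference `Σ_s w_s μ_s^{n-2}` of `x ↦ x^{n-2}` at the nodes `μ_1, …, μ_j`; it vanishes for
`2 ≤ n ≤ j`, since the leading coefficient of the interpolant of a polynomial of degree `< j - 1`
is zero. Hence the series for `Ω_{j+1}` may start at `n = 2`, and summing the exponential series
gives `Ω_{j+1} = Σ_s w_s (e^{μ_s} - 1 - μ_s) / μ_s^2`. The `e^{μ_s} - 1` part is
`(-1)^{j-1} Σ_s β^j_s (1 - e^{-μ_s}) / (μ_1 ⋯ μ_j)`, and the `μ_s` part is fixed by the barycentric
formula for the interpolant of `1` evaluated at `0`: `(μ_1 ⋯ μ_j) Σ_s w_s / μ_s = (-1)^{j-1}`.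
-/

open Finset Polynomial
open scoped Nat

theorem neg_one_pow_mul_self (R : Type*) [Monoid R] [HasDistribNeg R] (n : ℕ) :
    (-1 : R) ^ n * (-1) ^ n = 1 := by
  rw [← pow_add]
  exact Even.neg_one_pow ⟨n, rfl⟩

namespace Lagrange

variable {F ι : Type*} [Field F] [DecidableEq ι] {s : Finset ι} {v : ι → F}

theorem coeff_interpolate_card_sub_one (r : ι → F) :
    (interpolate s v r).coeff (#s - 1) = ∑ i ∈ s, r i * nodalWeight s v i := by
  rw [interpolate_apply, finsetSum_coeff]
  refine sum_congr rfl fun i hi => ?_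
  rw [basis_eq_prod_sub_inv_mul_nodal_div hi, ← nodal_erase_eq_nodal_div hi, coeff_C_mul,
    coeff_C_mul]
  have hdeg : #s - 1 = (nodal (s.erase i) v).natDegree := by
    rw [natDegree_nodal, card_erase_of_mem hi]
  rw [hdeg, nodal_monic.coeff_natDegree, mul_one, nodalWeight, prod_inv_distrib]

theorem sum_pow_mul_nodalWeight_eq_zero (hvs : Set.InjOn v s) {k : ℕ} (hk : k + 1 < #s) :
    ∑ i ∈ s, v i ^ k * nodalWeight s v i = 0 := by
  have hdeg : (X ^ k : F[X]).degree < #s := by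
    rw [degree_X_pow]
    exact_mod_cast (by omega : k < #s)
  have hcoeff := congrArg (coeff · (#s - 1)) (eq_interpolate hvs hdeg)
  simp only [coeff_interpolate_card_sub_one, coeff_X_pow, eval_X_pow] at hcoeff
  rw [← hcoeff, if_neg (by omega)]

theorem eval_nodal_mul_sum_nodalWeight_mul_inv_sub (hvs : Set.InjOn v s) (hs : s.Nonempty)
    {x : F} (hx : ∀ i ∈ s, x ≠ v i) :
    eval x (nodal s v) * ∑ i ∈ s, nodalWeight s v i * (x - v i)⁻¹ = 1 := by
  simpa only [interpolate_one hvs hs, Pi.one_apply, mul_one, eval_one] using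
    (eval_interpolate_not_at_node 1 hx).symm

theorem prod_mul_sum_nodalWeight_div (hvs : Set.InjOn v s) (hs : s.Nonempty)
    (hv : ∀ i ∈ s, v i ≠ 0) :
    (∏ i ∈ s, v i) * ∑ i ∈ s, nodalWeight s v i / v i = (-1) ^ (#s - 1) := by
  have hzero := eval_nodal_mul_sum_nodalWeight_mul_inv_sub hvs hs fun i hi => (hv i hi).symm
  have hcard : #s = #s - 1 + 1 := (Nat.sub_add_cancel hs.card_pos).symm
  simp only [eval_nodal, zero_sub, prod_neg, inv_neg, mul_neg, sum_neg_distrib, ← div_eq_mul_inv]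
    at hzero
  rw [hcard, pow_succ] at hzero
  linear_combination (-1 : F) ^ (#s - 1) * hzero -
    (∏ i ∈ s, v i) * (∑ i ∈ s, nodalWeight s v i / v i) * neg_one_pow_mul_self F (#s - 1)

end Lagrange

theorem Real.hasSum_pow_sub_two_div_factorial {x : ℝ} (hx : x ≠ 0) :
    HasSum (fun n : ℕ => if 2 ≤ n then x ^ (n - 2) / n ! else 0) ((exp x - 1 - x) / x ^ 2) := by
  rw [← hasSum_nat_add_iff' 2]
  have hexp := ((hasSum_nat_add_iff' 2).mpr (NormedSpace.expSeries_div_hasSum_exp x)).div_const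
    (x ^ 2)
  norm_num [sum_range_succ, ← exp_eq_exp_ℝ] at hexp ⊢
  rw [sub_sub]
  refine hexp.congr_fun fun n => ?_
  rw [pow_add, mul_div_right_comm, mul_div_cancel_right₀ _ (pow_ne_zero 2 hx)]

open Lagrange in
theorem hasSum_sum_pow_mul_nodalWeight_div_factorial {ι : Type*} [DecidableEq ι] {s : Finset ι}
    {v : ι → ℝ} (hvs : Set.InjOn v s) (hv : ∀ i ∈ s, v i ≠ 0) :
    HasSum (fun n : ℕ => if #s + 1 ≤ n then (∑ i ∈ s, v i ^ (n - 2) * nodalWeight s v i) / n !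
        else 0)
      (∑ i ∈ s, nodalWeight s v i * ((Real.exp (v i) - 1 - v i) / v i ^ 2)) := by
  refine (hasSum_sum fun i hi =>
    (Real.hasSum_pow_sub_two_div_factorial (hv i hi)).mul_left (nodalWeight s v i)).congr_fun
      fun n => ?_
  by_cases hn : 2 ≤ n
  · have hsum : ∑ i ∈ s, nodalWeight s v i * (if 2 ≤ n then v i ^ (n - 2) / n ! else 0) =
        (∑ i ∈ s, v i ^ (n - 2) * nodalWeight s v i) / n ! := by
      rw [sum_div]
      exact sum_congr rfl fun i _ => by rw [if_pos hn]; ring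
    rw [hsum]
    split_ifs with hsn
    · rfl
    · rw [sum_pow_mul_nodalWeight_eq_zero hvs (k := n - 2) (by omega), zero_div]
  · simp only [if_neg hn, mul_zero, sum_const_zero]
    split_ifs with hsn
    · rw [(card_eq_zero (s := s)).mp (by omega), sum_empty, zero_div]
    · rfl

/-- `γ_{l,n} = Σ_{s=1}^{l-1} μ_s^{n-2}/∏_{t=1,t≠s}^{l-1}(μ_s - μ_t)`. -/
noncomputable def gammaCoef (μ : ℕ → ℝ) (l n : ℕ) : ℝ :=
  ∑ s ∈ Finset.Icc 1 (l - 1),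
    μ s ^ (n - 2) / ∏ t ∈ (Finset.Icc 1 (l - 1)).erase s, (μ s - μ t)

/-- `Ω_l = Σ_{n=l}^∞ γ_{l,n}/n!`. -/
noncomputable def OmegaCoef (μ : ℕ → ℝ) (l : ℕ) : ℝ :=
  ∑' n : ℕ, if l ≤ n then gammaCoef μ l n / (n.factorial : ℝ) else 0

/-- `β^j_i = (-1)^{j-1} μ_1⋯μ_j e^{μ_i} / (μ_i^2 ∏_{t=1,t≠i}^{j}(μ_i - μ_t))`. -/
noncomputable def betaCoef (j : ℕ) (μ : ℕ → ℝ) (i : ℕ) : ℝ :=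
  (-1 : ℝ) ^ (j - 1) * (∏ t ∈ Finset.Icc 1 j, μ t) * Real.exp (μ i) /
    (μ i ^ 2 * ∏ t ∈ (Finset.Icc 1 j).erase i, (μ i - μ t))

theorem gammaCoef_succ_eq_sum_nodalWeight (μ : ℕ → ℝ) (j n : ℕ) :
    gammaCoef μ (j + 1) n = ∑ s ∈ Icc 1 j, μ s ^ (n - 2) * Lagrange.nodalWeight (Icc 1 j) μ s := by
  simp only [gammaCoef, Nat.add_sub_cancel, Lagrange.nodalWeight, prod_inv_distrib, div_eq_mul_inv]

theorem OmegaCoef_succ_eq_sum_nodalWeight {μ : ℕ → ℝ} {j : ℕ} (hinj : Set.InjOn μ (Icc 1 j))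
    (hμ : ∀ s ∈ Icc 1 j, μ s ≠ 0) :
    OmegaCoef μ (j + 1) = ∑ s ∈ Icc 1 j,
      Lagrange.nodalWeight (Icc 1 j) μ s * ((Real.exp (μ s) - 1 - μ s) / μ s ^ 2) := by
  have h := hasSum_sum_pow_mul_nodalWeight_div_factorial hinj hμ
  simp only [Nat.card_Icc, Nat.add_sub_cancel, ← gammaCoef_succ_eq_sum_nodalWeight] at h
  exact h.tsum_eq

theorem betaCoef_eq_mul_nodalWeight (j : ℕ) (μ : ℕ → ℝ) (i : ℕ) :
    betaCoef j μ i = (-1) ^ (j - 1) * (∏ t ∈ Icc 1 j, μ t) *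
      (Real.exp (μ i) / μ i ^ 2 * Lagrange.nodalWeight (Icc 1 j) μ i) := by
  simp only [betaCoef, Lagrange.nodalWeight, prod_inv_distrib, div_eq_mul_inv, mul_inv]
  ring

/-- `μ_1 μ_2 ⋯ μ_j · Ω_{j+1} = ε^j_1(μ_1,…,μ_j)
   = (-1)^{j-1}(Σ_{i=1}^j β^j_i (1 - e^{-μ_i}) - 1)`. -/
theorem mu_prod_Omega_eq_eps_one (j : ℕ) (hj : 1 ≤ j) (μ : ℕ → ℝ)
    (hpos : ∀ i, 1 ≤ i → i ≤ j → 0 < μ i)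
    (hmono : ∀ i i', 1 ≤ i → i < i' → i' ≤ j → μ i < μ i') :
    (∏ t ∈ Finset.Icc 1 j, μ t) * OmegaCoef μ (j + 1) =
      (-1 : ℝ) ^ (j - 1) *
        ((∑ i ∈ Finset.Icc 1 j, betaCoef j μ i * (1 - Real.exp (-μ i))) - 1) := by
  set w := Lagrange.nodalWeight (Icc 1 j) μ
  have hμ : ∀ i ∈ Icc 1 j, μ i ≠ 0 := fun i hi =>
    (hpos i (mem_Icc.mp hi).1 (mem_Icc.mp hi).2).ne'
  have hinj : Set.InjOn μ (Icc 1 j) := StrictMonoOn.injOn fun a ha b hb hab =>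
    hmono a b (mem_Icc.mp ha).1 hab (mem_Icc.mp hb).2
  have hsign := Lagrange.prod_mul_sum_nodalWeight_div hinj (nonempty_Icc.mpr hj) hμ
  rw [Nat.card_Icc, Nat.add_sub_cancel] at hsign
  have hbeta : ∑ i ∈ Icc 1 j, betaCoef j μ i * (1 - Real.exp (-μ i)) =
      (-1) ^ (j - 1) * ((∏ t ∈ Icc 1 j, μ t) *
        ∑ i ∈ Icc 1 j, w i * ((Real.exp (μ i) - 1 - μ i) / μ i ^ 2) +
          (∏ t ∈ Icc 1 j, μ t) * ∑ i ∈ Icc 1 j, w i / μ i) := by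
    simp only [mul_sum, ← sum_add_distrib]
    refine sum_congr rfl fun i hi => ?_
    rw [betaCoef_eq_mul_nodalWeight, Real.exp_neg]
    field_simp [hμ i hi, Real.exp_ne_zero]
    ring
  rw [OmegaCoef_succ_eq_sum_nodalWeight hinj hμ, hbeta, hsign, mul_sub, ← mul_assoc,
    neg_one_pow_mul_self, one_mul, mul_one, add_sub_cancel_right]
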